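/- Let ρ be any 2×2 complex matrix and w_ρ(m,α,β) = Tr(ρ · U(m,α,β)) its qubit tomogram. Define the kernel K_y(m,α,β; m',α',β') = (1/2)·δ_{m m'}·(1 − 3 cos α sin β cos α' sin β' + 3 sin α sin β sin α' sin β' − 3 cos β cos β'). Then for all m ∈ {−1/2,1/2} and real α, β: Σ_{m' ∈ {−1/2,1/2}} (1/(2π)) ∫₀^{2π} ∫₀^{π} K_y(m,α,β; m',α',β') · w_ρ(m',α',β') · sin β' dβ' dα' = Tr(σ_y ρ σ_y · U(m,α,β)). -/

import Mathlib

open Matrix Real MeasureTheory intervalIntegral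

noncomputable def sigmaX : Matrix (Fin 2) (Fin 2) ℂ := !![0, 1; 1, 0]
noncomputable def sigmaY : Matrix (Fin 2) (Fin 2) ℂ := !![0, -Complex.I; Complex.I, 0]
noncomputable def sigmaZ : Matrix (Fin 2) (Fin 2) ℂ := !![1, 0; 0, -1]

/-- The qubit de-quantizer U(m, α, β). -/
noncomputable def dequantizer (m α β : ℝ) : Matrix (Fin 2) (Fin 2) ℂ :=
  (1/2 : ℂ) • (1 : Matrix (Fin 2) (Fin 2) ℂ)
    - ((m * Real.cos α * Real.sin β : ℝ) : ℂ) • sigmaX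
    - ((m * Real.sin α * Real.sin β : ℝ) : ℂ) • sigmaY
    + ((m * Real.cos β : ℝ) : ℂ) • sigmaZ

/-- The qubit tomogram of a 2×2 complex matrix ρ. -/
noncomputable def tomogram (ρ : Matrix (Fin 2) (Fin 2) ℂ) (m α β : ℝ) : ℂ :=
  (ρ * dequantizer m α β).trace

/-- The tomographic kernel of the channel ρ ↦ sigmaY ρ sigmaY. -/
noncomputable def kernelY (m α β m' α' β' : ℝ) : ℝ :=
  (1/2) * (if m = m' then (1:ℝ) else 0) *
    (1 - 3 * Real.cos α * Real.sin β * Real.cos α' * Real.sin β'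
      + 3 * Real.sin α * Real.sin β * Real.sin α' * Real.sin β'
      - 3 * Real.cos β * Real.cos β')

/-!
Both the tomogram `w_ρ(m', ·)` and the kernel are affine functions of the direction
`n = (cos α sin β, sin α sin β, cos β)` of the unit sphere, and the sphere moments
`∫ 1 = 4π`, `∫ nᵢ = 0`, `∫ nᵢ nⱼ = (4π/3) δᵢⱼ` reduce the integral of a product of two affine
functions to a pairing of their coefficients. The tomogram has coefficients
`(Tr ρ / 2, m' (-Tr ρσₓ, -Tr ρσ_y, Tr ρσ_z))`, and the kernel, through the signs
`(-1, 1, -1)` in front of `nₓ n'ₓ, n_y n'_y, n_z n'_z`, maps them to those of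
`σ_y ρ σ_y`, since conjugation by `σ_y` fixes `σ_y` and negates `σₓ` and `σ_z`.
Every monomial `nᵢ nⱼ` is an azimuthal factor times a polar factor, so the moments are
products of one-variable trigonometric integrals.
-/

theorem integral_integral_sum_mul_smul {ι E : Type*} [Fintype ι]
    [NormedAddCommGroup E] [NormedSpace ℝ E] [CompleteSpace E] {a b c d : ℝ}
    (u v : ι → ℝ → ℝ) (C : ι → E) (hu : ∀ k, IntervalIntegrable (u k) volume a b)
    (hv : ∀ k, IntervalIntegrable (v k) volume c d) :
    ∫ x in a..b, ∫ y in c..d, ∑ k, (u k x * v k y) • C k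
      = ∑ k, ((∫ x in a..b, u k x) * ∫ y in c..d, v k y) • C k := by
  have inner (x : ℝ) : ∫ y in c..d, ∑ k, (u k x * v k y) • C k
      = ∑ k, (u k x * ∫ y in c..d, v k y) • C k := by
    rw [intervalIntegral.integral_finsetSum fun k _ => ((hv k).const_mul _).smul_continuousOn continuousOn_const]
    simp_rw [intervalIntegral.integral_smul_const, intervalIntegral.integral_const_mul]
  simp_rw [inner]
  rw [intervalIntegral.integral_finsetSum fun k _ => ((hu k).mul_const _).smul_continuousOn continuousOn_const]
  simp_rw [intervalIntegral.integral_smul_const, intervalIntegral.integral_mul_const]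

/-- Homogeneous coordinates `(1, n)` of the point `n` of the unit sphere with azimuth `α` and
polar angle `β`: affine functions of `n` are linear functions of them. -/
noncomputable def sphereHom (α β : ℝ) : Fin 4 → ℝ :=
  ![1, cos α * sin β, sin α * sin β, cos β]

noncomputable def sphereHomAzimuthal : Fin 4 → ℝ → ℝ := ![1, cos, sin, 1]

noncomputable def sphereHomPolar : Fin 4 → ℝ → ℝ := ![1, sin, sin, cos]

theorem sphereHom_eq_mul (α β : ℝ) (k : Fin 4) :
    sphereHom α β k = sphereHomAzimuthal k α * sphereHomPolar k β := by
  fin_cases k <;> simp [sphereHom, sphereHomAzimuthal, sphereHomPolar]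

theorem continuous_sphereHomAzimuthal (k : Fin 4) : Continuous (sphereHomAzimuthal k) := by
  fin_cases k <;> simp [sphereHomAzimuthal, continuous_one, continuous_cos, continuous_sin]

theorem continuous_sphereHomPolar (k : Fin 4) : Continuous (sphereHomPolar k) := by
  fin_cases k <;> simp [sphereHomPolar, continuous_one, continuous_cos, continuous_sin]

theorem sphereHom_moment (k l : Fin 4) :
    (∫ α in 0..2 * π, sphereHomAzimuthal k α * sphereHomAzimuthal l α)
      * (∫ β in 0..π, sphereHomPolar k β * sphereHomPolar l β * sin β)
      = if k = l then 4 * π * ![1, 1 / 3, 1 / 3, 1 / 3] k else 0 := by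
  fin_cases k <;> fin_cases l <;>
    simp [sphereHomAzimuthal, sphereHomPolar, ← sq, ← pow_succ, mul_comm (cos _) (sin _),
      mul_comm (cos _ ^ 2) (sin _), integral_sin_sq, integral_cos_sq] <;> ring

theorem integral_sphere_sum_mul_sum (a b : Fin 4 → ℂ) :
    ∫ α in 0..2 * π, ∫ β in 0..π,
        (∑ k, a k * sphereHom α β k) * (∑ l, b l * sphereHom α β l) * sin β
      = 4 * π * (a 0 * b 0 + (a 1 * b 1 + a 2 * b 2 + a 3 * b 3) / 3) := by
  have separate (α β : ℝ) :
      (∑ k, a k * sphereHom α β k) * (∑ l, b l * sphereHom α β l) * sin β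
        = ∑ kl : Fin 4 × Fin 4,
          (sphereHomAzimuthal kl.1 α * sphereHomAzimuthal kl.2 α
            * (sphereHomPolar kl.1 β * sphereHomPolar kl.2 β * sin β)) • (a kl.1 * b kl.2) := by
    rw [Fintype.sum_prod_type, Finset.sum_mul_sum, Finset.sum_mul]
    simp only [Finset.sum_mul, sphereHom_eq_mul, Complex.real_smul]
    push_cast
    refine Finset.sum_congr rfl fun k _ => Finset.sum_congr rfl fun l _ => ?_
    ring
  simp_rw [separate]
  rw [integral_integral_sum_mul_smul
    (fun (kl : Fin 4 × Fin 4) α => sphereHomAzimuthal kl.1 α * sphereHomAzimuthal kl.2 α)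
    (fun kl β => sphereHomPolar kl.1 β * sphereHomPolar kl.2 β * sin β) (fun kl => a kl.1 * b kl.2)
    (fun kl => ((continuous_sphereHomAzimuthal kl.1).mul
      (continuous_sphereHomAzimuthal kl.2)).intervalIntegrable _ _)
    (fun kl => (((continuous_sphereHomPolar kl.1).mul (continuous_sphereHomPolar kl.2)).mul
      continuous_sin).intervalIntegrable _ _)]
  simp only [sphereHom_moment, ite_smul, zero_smul, Fintype.sum_prod_type, Finset.sum_ite_eq,
    Finset.mem_univ, if_true, Fin.sum_univ_four, cons_val_zero, cons_val_one, cons_val,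
    Complex.real_smul]
  push_cast
  ring

theorem tomogram_eq_sum (ρ : Matrix (Fin 2) (Fin 2) ℂ) (m α β : ℝ) :
    tomogram ρ m α β = ∑ k, ![ρ.trace / 2, -m * (ρ * sigmaX).trace, -m * (ρ * sigmaY).trace,
      m * (ρ * sigmaZ).trace] k * sphereHom α β k := by
  simp only [tomogram, dequantizer, Matrix.mul_add, Matrix.mul_sub, Matrix.mul_smul,
    Matrix.trace_add, Matrix.trace_sub, Matrix.trace_smul, Matrix.mul_one, Fin.sum_univ_four,
    sphereHom, smul_eq_mul, Complex.ofReal_mul, Complex.ofReal_one, cons_val_zero, cons_val_one,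
    cons_val]
  ring

theorem sigmaY_mul_sigmaY : sigmaY * sigmaY = 1 := by
  ext i j; fin_cases i <;> fin_cases j <;> simp [sigmaY]

theorem sigmaY_mul_sigmaY_mul_sigmaY : sigmaY * sigmaY * sigmaY = sigmaY := by
  rw [sigmaY_mul_sigmaY, Matrix.one_mul]

theorem sigmaY_mul_sigmaX_mul_sigmaY : sigmaY * sigmaX * sigmaY = -sigmaX := by
  ext i j; fin_cases i <;> fin_cases j <;> simp [sigmaX, sigmaY]

theorem sigmaY_mul_sigmaZ_mul_sigmaY : sigmaY * sigmaZ * sigmaY = -sigmaZ := by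
  ext i j; fin_cases i <;> fin_cases j <;> simp [sigmaY, sigmaZ]

theorem trace_sigmaY_mul_mul_sigmaY_mul (ρ A : Matrix (Fin 2) (Fin 2) ℂ) :
    (sigmaY * ρ * sigmaY * A).trace = (ρ * (sigmaY * A * sigmaY)).trace := by
  simp only [Matrix.mul_assoc]
  rw [Matrix.trace_mul_comm]
  simp only [Matrix.mul_assoc]

theorem trace_sigmaY_mul_mul_sigmaY (ρ : Matrix (Fin 2) (Fin 2) ℂ) :
    (sigmaY * ρ * sigmaY).trace = ρ.trace := by
  simpa [sigmaY_mul_sigmaY] using trace_sigmaY_mul_mul_sigmaY_mul ρ 1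

theorem kernelY_self_eq_sum (m α β α' β' : ℝ) :
    kernelY m α β m α' β' = ∑ k, ![1 / 2, -(3 / 2) * sphereHom α β 1, 3 / 2 * sphereHom α β 2,
      -(3 / 2) * sphereHom α β 3] k * sphereHom α' β' k := by
  simp only [kernelY, if_true, Fin.sum_univ_four, sphereHom, cons_val_zero, cons_val_one,
    cons_val]
  ring

theorem kernelY_spin_sum {m : ℝ} (hm : m = -(1 / 2) ∨ m = 1 / 2) (α β α' β' : ℝ) (w : ℝ → ℂ) :
    (kernelY m α β (1 / 2) α' β' : ℂ) * w (1 / 2)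
        + (kernelY m α β (-(1 / 2)) α' β' : ℂ) * w (-(1 / 2))
      = kernelY m α β m α' β' * w m := by
  rcases hm with rfl | rfl <;> norm_num [kernelY]

theorem kernelY_represents (ρ : Matrix (Fin 2) (Fin 2) ℂ) :
    ∀ m : ℝ, m = -(1/2) ∨ m = 1/2 → ∀ α β : ℝ,
      (1 / (2 * (Real.pi : ℂ))) *
        ∫ α' in (0:ℝ)..(2 * Real.pi), ∫ β' in (0:ℝ)..Real.pi,
          ((kernelY m α β (1/2) α' β' : ℂ) * tomogram ρ (1/2) α' β'
            + (kernelY m α β (-(1/2)) α' β' : ℂ) * tomogram ρ (-(1/2)) α' β')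
          * (Real.sin β' : ℂ)
      = (sigmaY * ρ * sigmaY * dequantizer m α β).trace := by
  intro m hm α β
  have collapse (α' β' : ℝ) :
      (kernelY m α β (1/2) α' β' : ℂ) * tomogram ρ (1/2) α' β'
        + (kernelY m α β (-(1/2)) α' β' : ℂ) * tomogram ρ (-(1/2)) α' β'
        = kernelY m α β m α' β' * tomogram ρ m α' β' :=
    kernelY_spin_sum hm α β α' β' (tomogram ρ · α' β')
  simp_rw [collapse, kernelY_self_eq_sum, Complex.ofReal_sum, Complex.ofReal_mul,
    tomogram_eq_sum, integral_sphere_sum_mul_sum]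
  change _ = tomogram (sigmaY * ρ * sigmaY) m α β
  rw [tomogram_eq_sum]
  simp only [trace_sigmaY_mul_mul_sigmaY_mul, trace_sigmaY_mul_mul_sigmaY,
    sigmaY_mul_sigmaX_mul_sigmaY, sigmaY_mul_sigmaY_mul_sigmaY, sigmaY_mul_sigmaZ_mul_sigmaY,
    Matrix.mul_neg, Matrix.trace_neg]
  simp only [Fin.sum_univ_four, sphereHom, cons_val_zero, cons_val_one, cons_val]
  push_cast
  field_simp
  ring
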